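/- Let E ⊆ ℂ be a nonempty closed set. Suppose there exist positive constants A, r₀ and η, with exp(−η·log(2/t)/log log(4/t)) increasing in t on (0, 2r₀), and an increasing function g : (0,∞) → (0,∞) satisfying g(t) = exp(−η·log(2/t)/log log(4/t)) for all t ∈ (0, 2r₀), such that Λ_g(E ∩ B̄(a,r)) ≥ A·g(2r) for every a ∈ E and every r ∈ (0, r₀), where B̄(a,r) is the closed disc of center a and radius r. Then E satisfies condition (U)_{2,β} for some β > 0. -/

import Mathlib

/-!
If the annulus `{ρ ≤ |z - a| ≤ r}` with `ρ = r (log 1/r)^(-β)` misses `E`, then `E ∩ B̄(a, r)`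
lies in `B̄(a, ρ)`, and covering it by that one disc (plus discs of arbitrarily small gauge) gives
`A g(2r) ≤ Λ_g(E ∩ B̄(a, r)) ≤ g(2ρ)`. Now `g(2s) = exp(-η φ(log 1/s))` with
`φ(x) = x / log (x + log 2)`, and passing from `r` to `ρ` adds `β log x` to the argument
`x = log 1/r`, which raises `φ` by at least `β / 4`. Hence `g(2ρ) ≤ e^(-ηβ/4) g(2r) < A g(2r)`
once `β` is large, a contradiction.
-/

open Metric Set
open scoped ENNReal

/-- A set `E ⊆ ℂ` satisfies condition `(U)_{2,β}`. -/
def CondU2 (E : Set ℂ) (β : ℝ) : Prop :=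
  ∃ C > (0 : ℝ), ∃ r₀ > (0 : ℝ), ∀ a ∈ E, ∀ r ∈ Set.Ioo (0 : ℝ) r₀,
    ({z : ℂ | C * r * (Real.log (1 / r)) ^ (-β) ≤ dist z a ∧ dist z a ≤ r} ∩ E).Nonempty

/-- The `g`-Hausdorff content of `F ⊆ ℂ`:
`Λ_g(F) = inf { ∑ₖ g(diam Bₖ) : (Bₖ) a countable cover of F by closed discs }`. -/
noncomputable def hContent (g : ℝ → ℝ) (F : Set ℂ) : ℝ≥0∞ :=
  ⨅ (B : ℕ → ℂ × ℝ) (_ : ∀ k, 0 ≤ (B k).2)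
    (_ : F ⊆ ⋃ k, closedBall (B k).1 (B k).2),
    ∑' k, ENNReal.ofReal (g (diam (closedBall (B k).1 (B k).2)))

open Filter Real

lemma hContent_le_of_subset_closedBall {g : ℝ → ℝ} (hg : ∀ ε > 0, ∃ t ≥ 0, g (2 * t) ≤ ε)
    {F : Set ℂ} {a : ℂ} {ρ : ℝ} (hρ : 0 ≤ ρ) (hF : F ⊆ closedBall a ρ) :
    hContent g F ≤ ENNReal.ofReal (g (2 * ρ)) := by
  refine ENNReal.le_of_forall_pos_le_add fun ε hε _ => ?_
  obtain ⟨δ, hδ, hδε⟩ := ENNReal.exists_pos_sum_of_countable (ENNReal.coe_ne_zero.2 hε.ne') ℕ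
  choose t ht using fun k => hg (δ k) (hδ k)
  -- covers are sequences: pad `closedBall a ρ` with discs whose gauges sum to at most `ε`
  let B : ℕ → ℂ × ℝ := fun k => Nat.casesOn k (a, ρ) fun k => (a, t k)
  have hB : ∀ k, 0 ≤ (B k).2 := by
    rintro (_ | k)
    exacts [hρ, (ht k).1]
  calc hContent g F
      ≤ ∑' k, ENNReal.ofReal (g (diam (closedBall (B k).1 (B k).2))) :=
        iInf₂_le_of_le B hB <| iInf_le _ fun z hz => mem_iUnion.2 ⟨0, hF hz⟩
    _ = ENNReal.ofReal (g (2 * ρ)) + ∑' k, ENNReal.ofReal (g (2 * t k)) := by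
        rw [tsum_eq_zero_add' ENNReal.summable]
        simp only [B, Nat.rec_zero, diam_closedBall_eq _ hρ, diam_closedBall_eq _ (ht _).1]
    _ ≤ ENNReal.ofReal (g (2 * ρ)) + ε := by
        gcongr
        calc ∑' k, ENNReal.ofReal (g (2 * t k)) ≤ ∑' k, (δ k : ℝ≥0∞) :=
              ENNReal.tsum_le_tsum fun k => ENNReal.ofReal_le_of_le_toReal (ht k).2
          _ ≤ ε := hδε.le

lemma nonempty_annulus_inter_of_lt {g : ℝ → ℝ} (hg : ∀ ε > 0, ∃ t ≥ 0, g (2 * t) ≤ ε)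
    {E : Set ℂ} {a : ℂ} {r ρ c : ℝ} (hρ : 0 ≤ ρ) (hgρ : 0 ≤ g (2 * ρ))
    (hc : ENNReal.ofReal c ≤ hContent g (E ∩ closedBall a r)) (hlt : g (2 * ρ) < c) :
    ({z : ℂ | ρ ≤ dist z a ∧ dist z a ≤ r} ∩ E).Nonempty := by
  by_contra hempty
  have hsub : E ∩ closedBall a r ⊆ closedBall a ρ := fun z hz =>
    mem_closedBall.2 (not_lt.1 fun h => hempty ⟨z, ⟨h.le, hz.2⟩, hz.1⟩)
  have hle := hc.trans (hContent_le_of_subset_closedBall hg hρ hsub)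
  exact (ENNReal.ofReal_lt_ofReal_iff (hgρ.trans_lt hlt)).2 hlt |>.not_ge hle

-- `g t = exp (-η * gaugeExponent (log (2 / t)))` on `(0, 2 r₀)`.
noncomputable def gaugeExponent (x : ℝ) : ℝ := x / log (x + log 2)

lemma tendsto_gaugeExponent_atTop : Tendsto gaugeExponent atTop atTop := by
  have h : Tendsto (fun x => log (x + log 2) / x) atTop (nhdsWithin 0 (Ioi 0)) := by
    refine tendsto_nhdsWithin_iff.2 ⟨?_, ?_⟩
    · have := (tendsto_pow_log_div_mul_add_atTop 1 (-log 2) 1 one_ne_zero).comp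
        (tendsto_atTop_add_const_right _ (log 2) tendsto_id)
      refine this.congr fun x => ?_
      simp
    · filter_upwards [eventually_gt_atTop 1] with x hx
      exact div_pos (log_pos (by linarith [log_pos one_lt_two])) (by linarith)
  exact h.inv_tendsto_nhdsGT_zero.congr fun x => by simp [gaugeExponent]

lemma exp_gauge_two_mul_eq (η : ℝ) {s : ℝ} (hs : 0 < s) :
    exp (-η * (log (2 / (2 * s)) / log (log (4 / (2 * s))))) =
      exp (-η * gaugeExponent (-log s)) := by
  have h2 : (2 : ℝ) / (2 * s) = s⁻¹ := by field_simp
  have h4 : (4 : ℝ) / (2 * s) = 2 * s⁻¹ := by field_simp; norm_num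
  rw [h2, h4, log_mul two_ne_zero (inv_ne_zero hs.ne'), log_inv, gaugeExponent, add_comm (log 2)]

lemma le_gaugeExponent_add_mul_log_sub {β x : ℝ} (hβ : 0 < β) (hx : exp 2 ≤ x)
    (hxβ : β + 2 ≤ x) : β / 4 ≤ gaugeExponent (x + β * log x) - gaugeExponent x := by
  have hlog2 : 0 < log 2 ∧ log 2 < 1 := ⟨log_pos one_lt_two, by linarith [log_two_lt_d9]⟩
  have hx₀ : 0 < x := (exp_pos 2).trans_le hx
  have hlx : 2 ≤ log x := (le_log_iff_exp_le hx₀).2 hx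
  set u := x + log 2
  set v := x + β * log x + log 2
  have hu : exp 2 ≤ u := by linarith
  have hu₀ : 0 < u := (exp_pos 2).trans_le hu
  have huv : u ≤ v := by nlinarith
  have hlu : 2 ≤ log u := (le_log_iff_exp_le hu₀).2 hu
  have hluv : log u ≤ log v := log_le_log hu₀ huv
  have hvx : v ≤ x ^ 2 := by nlinarith [log_le_sub_one_of_pos hx₀]
  have hlv : log v ≤ 2 * log x := by
    simpa [log_pow] using log_le_log (hu₀.trans_le huv) hvx
  -- `log v - log u ≤ v / u - 1`, multiplied out
  have hincr : x * (log v - log u) ≤ β * log x := by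
    have h := log_le_sub_one_of_pos (div_pos (hu₀.trans_le huv) hu₀)
    rw [log_div (hu₀.trans_le huv).ne' hu₀.ne', div_sub_one hu₀.ne', le_div_iff₀ hu₀] at h
    nlinarith
  have hlu₀ : 0 < log u := by linarith
  have hlv₀ : 0 < log v := by linarith
  rw [gaugeExponent, gaugeExponent, div_sub_div _ _ hlv₀.ne' hlu₀.ne', le_div_iff₀ (by positivity)]
  nlinarith [mul_le_mul_of_nonneg_left hlv (by positivity : 0 ≤ β * log u / 4),
    mul_nonneg (by positivity : 0 ≤ β * log x) (by linarith : 0 ≤ log u - 2)]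

lemma exists_mem_Ioo_exp_neg_mul_gaugeExponent_le {η r₀ ε : ℝ} (hη : 0 < η) (hr₀ : 0 < r₀)
    (hε : 0 < ε) : ∃ s ∈ Ioo 0 r₀, exp (-η * gaugeExponent (-log s)) ≤ ε := by
  obtain ⟨y, hyr₀, hyε⟩ := ((eventually_gt_atTop (-log r₀)).and
    ((tendsto_gaugeExponent_atTop.const_mul_atTop hη).eventually_ge_atTop (-log ε))).exists
  refine ⟨exp (-y), ⟨exp_pos _, ?_⟩, ?_⟩
  · exact (exp_lt_exp.2 (by linarith)).trans_eq (exp_log hr₀)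
  · rw [log_exp, neg_neg]
    exact (exp_le_exp.2 (by linarith)).trans_eq (exp_log hε)

lemma neg_log_mul_rpow_neg {r x : ℝ} (β : ℝ) (hr : 0 < r) (hx : 0 < x) :
    -log (r * x ^ (-β)) = -log r + β * log x := by
  rw [log_mul hr.ne' (rpow_pos_of_pos hx _).ne', log_rpow hx]
  ring

lemma exp_neg_mul_gaugeExponent_lt {A η β x : ℝ} (hA : 0 < A) (hη : 0 < η) (hβ : 0 < β)
    (hβA : -log A < η * (β / 4)) (hx : max (exp 2) (β + 2) ≤ x) :
    exp (-η * gaugeExponent (x + β * log x)) < A * exp (-η * gaugeExponent x) := by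
  have hgain := le_gaugeExponent_add_mul_log_sub hβ ((le_max_left _ _).trans hx)
    ((le_max_right _ _).trans hx)
  rw [← exp_log hA, ← exp_add, exp_lt_exp]
  nlinarith [mul_le_mul_of_nonneg_left hgain hη.le]

theorem stmt_16 (E : Set ℂ)
    (A r₀ η : ℝ) (hA : 0 < A) (hr₀ : 0 < r₀) (hη : 0 < η)
    (g : ℝ → ℝ)
    (hgeq : ∀ t ∈ Set.Ioo (0 : ℝ) (2 * r₀),
      g t = Real.exp (-η * (Real.log (2 / t) / Real.log (Real.log (4 / t)))))
    (hcont : ∀ a ∈ E, ∀ r ∈ Set.Ioo (0 : ℝ) r₀,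
      ENNReal.ofReal (A * g (2 * r)) ≤ hContent g (E ∩ closedBall a r)) :
    ∃ β > (0 : ℝ), CondU2 E β := by
  have hg : ∀ s ∈ Ioo 0 r₀, g (2 * s) = exp (-η * gaugeExponent (-log s)) := fun s hs =>
    (hgeq _ ⟨by linarith [hs.1], by linarith [hs.2]⟩).trans (exp_gauge_two_mul_eq η hs.1)
  have hsmall : ∀ ε > 0, ∃ t ≥ 0, g (2 * t) ≤ ε := fun ε hε => by
    obtain ⟨s, hs, hsε⟩ := exists_mem_Ioo_exp_neg_mul_gaugeExponent_le hη hr₀ hε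
    exact ⟨s, hs.1.le, (hg s hs).trans_le hsε⟩
  set β := 4 * (|log A| + 1) / η with hβ
  have hβ₀ : 0 < β := by positivity
  have hβA : -log A < η * (β / 4) := by
    rw [hβ]; field_simp; linarith [neg_le_abs (log A)]
  refine ⟨β, hβ₀, 1, one_pos, min r₀ (exp (-max (exp 2) (β + 2))), by positivity, ?_⟩
  rintro a ha r ⟨hr, hrR⟩
  have hrr₀ : r < r₀ := hrR.trans_le (min_le_left _ _)
  rw [one_div, log_inv, one_mul]
  set x := -log r
  have hx : max (exp 2) (β + 2) < x := by
    have := log_lt_log hr (hrR.trans_le (min_le_right _ _))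
    rw [log_exp] at this
    linarith
  have hx₁ : 1 ≤ x := by linarith [add_one_le_exp 2, le_max_left (exp 2) (β + 2)]
  set ρ := r * x ^ (-β)
  have hρ : 0 < ρ := mul_pos hr (rpow_pos_of_pos (by linarith) _)
  have hρr : ρ ≤ r :=
    mul_le_of_le_one_right hr.le (rpow_le_one_of_one_le_of_nonpos hx₁ (by linarith))
  have hgρ := hg ρ ⟨hρ, hρr.trans_lt hrr₀⟩
  refine nonempty_annulus_inter_of_lt hsmall hρ.le (hgρ ▸ (exp_pos _).le)
    (hcont a ha r ⟨hr, hrr₀⟩) ?_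
  rw [hgρ, hg r ⟨hr, hrr₀⟩, neg_log_mul_rpow_neg β hr (by linarith)]
  exact exp_neg_mul_gaugeExponent_lt hA hη hβ₀ hβA hx.le
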